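/- Let α ≥ 2 be a natural number and let k = 2α − 2 (so k is even, k ≥ 2 and α = ⌈(k+1)/2⌉ = k/2 + 1). Then for every real number p, δ^{k,α}(p) = (∑_{ℓ=α}^{k} (k choose ℓ) p^ℓ (1−p)^{k−ℓ}) − p + (k choose (α−1)) p^α (1−p)^{α−1}. -/

import Mathlib

/-!
Write `q = 1 - p`. Each summand of `δ^{k,α}(p)` splits as `q · C(k,ℓ) p^ℓ q^(k-ℓ) - p · C(k,ℓ) q^ℓ p^(k-ℓ)`,
so `δ = q S(p) - p S(q)` with `S` the upper binomial tail `P(Bin(k,p) ≥ α)`. Reflecting `ℓ ↦ k - ℓ`,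
`S(q) = P(Bin(k,p) ≤ k - α)`; for `k = 2α - 2` the two tails miss only the middle term `ℓ = α - 1`,
so `S(q) = 1 - S(p) - C(k,α-1) (pq)^(α-1)`, and substituting gives the claim.
-/

/-- The expected relative progress of one Slush round with sample size `k`,
majority threshold `α`, at fraction `p` of parties holding opinion 1. -/
noncomputable def slushDelta (k α : ℕ) (p : ℝ) : ℝ :=
  ∑ ℓ ∈ Finset.Icc α k,
    (k.choose ℓ : ℝ) * (p ^ ℓ * (1 - p) ^ (k - ℓ + 1) - (1 - p) ^ ℓ * p ^ (k - ℓ + 1))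

open Finset

noncomputable def binomUpperTail (k α : ℕ) (p : ℝ) : ℝ :=
  ∑ ℓ ∈ Icc α k, (k.choose ℓ : ℝ) * p ^ ℓ * (1 - p) ^ (k - ℓ)

theorem slushDelta_eq_sub_binomUpperTail (k α : ℕ) (p : ℝ) :
    slushDelta k α p = (1 - p) * binomUpperTail k α p - p * binomUpperTail k α (1 - p) := by
  rw [slushDelta, binomUpperTail, binomUpperTail, sub_sub_cancel, mul_sum, mul_sum,
    ← sum_sub_distrib]
  refine sum_congr rfl fun ℓ _ => ?_
  ring

theorem binomUpperTail_one_sub (k α : ℕ) (p : ℝ) :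
    binomUpperTail k α (1 - p)
      = ∑ j ∈ range (k + 1 - α), (k.choose j : ℝ) * p ^ j * (1 - p) ^ (k - j) := by
  rw [binomUpperTail, sub_sub_cancel]
  refine sum_nbij' (fun ℓ => k - ℓ) (fun j => k - j) ?_ ?_ ?_ ?_ ?_
  all_goals intro i hi; simp only [mem_Icc, mem_range] at hi
  · simp only [mem_range]; omega
  · simp only [mem_Icc]; omega
  · omega
  · omega
  · rw [Nat.sub_sub_self hi.2, Nat.choose_symm hi.2]
    ring

theorem sum_range_add_binomUpperTail {k α : ℕ} (h : α ≤ k + 1) (p : ℝ) :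
    ∑ j ∈ range α, (k.choose j : ℝ) * p ^ j * (1 - p) ^ (k - j) + binomUpperTail k α p = 1 := by
  rw [binomUpperTail, ← Ico_add_one_right_eq_Icc, sum_range_add_sum_Ico _ h]
  have hbinom := add_pow p (1 - p) k
  rw [add_sub_cancel, one_pow] at hbinom
  exact (sum_congr rfl fun j _ => by ring).trans hbinom.symm

theorem binomUpperTail_one_sub_of_add_two_eq {k α : ℕ} (hk : k + 2 = 2 * α) (p : ℝ) :
    binomUpperTail k α (1 - p)
      = 1 - binomUpperTail k α p - (k.choose (α - 1) : ℝ) * p ^ (α - 1) * (1 - p) ^ (α - 1) := by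
  have hsum := sum_range_add_binomUpperTail (k := k) (α := α) (by omega) p
  obtain ⟨a, rfl⟩ : ∃ a, α = a + 1 := ⟨α - 1, by omega⟩
  rw [sum_range_succ, show k - a = a by omega] at hsum
  rw [binomUpperTail_one_sub, show k + 1 - (a + 1) = a by omega, Nat.add_sub_cancel]
  linarith

/-- for `α ≥ 2` and even `k = 2α − 2`,
`δ^{k,α}(p) = (∑_{ℓ=α}^{k} C(k,ℓ) p^ℓ (1−p)^{k−ℓ}) − p + C(k,α−1) p^α (1−p)^{α−1}`. -/
theorem slushDelta_short_form_even (α : ℕ) (hα : 2 ≤ α) (k : ℕ) (hk : k = 2 * α - 2)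
    (p : ℝ) :
    slushDelta k α p
      = (∑ ℓ ∈ Finset.Icc α k, (k.choose ℓ : ℝ) * p ^ ℓ * (1 - p) ^ (k - ℓ)) - p
        + (k.choose (α - 1) : ℝ) * p ^ α * (1 - p) ^ (α - 1) := by
  rw [slushDelta_eq_sub_binomUpperTail,
    binomUpperTail_one_sub_of_add_two_eq (by omega : k + 2 = 2 * α), ← binomUpperTail]
  obtain ⟨a, rfl⟩ : ∃ a, α = a + 1 := ⟨α - 1, by omega⟩
  rw [Nat.add_sub_cancel]
  ring
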